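/- arXiv:2311.04604 — 2 statements merged into one kernel-verified Lean document; each statement's English description precedes it below -/
import Mathlib

section
/- If f : ℝⁿ → ℝ is differentiable with L-Lipschitz gradient, then its Gaussian smoothing fᵘ(x) = E_{u ~ N(0,I)}[f(x + μu)] is differentiable with L-Lipschitz gradient. -/
open MeasureTheory

/-- The standard Gaussian measure `N(0, I)` on `ℝⁿ`. -/
noncomputable def stdGaussian (n : ℕ) : Measure (EuclideanSpace ℝ (Fin n)) :=
  (Measure.pi fun _ : Fin n => ProbabilityTheory.gaussianReal 0 1).map
    (EuclideanSpace.equiv (Fin n) ℝ).symm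

/-- Gaussian smoothing `fᵘ(x) = E_{u ~ N(0,I)}[f(x + μ u)]`. -/
noncomputable def gaussianSmoothing {n : ℕ} (f : EuclideanSpace ℝ (Fin n) → ℝ) (μ : ℝ) :
    EuclideanSpace ℝ (Fin n) → ℝ :=
  fun x => ∫ u, f (x + μ • u) ∂(stdGaussian n)

/-!
Write `fᵘ(x) = E[f(x + X)]` with `X = μ u`, a random vector with finite second moment.
A function whose derivative is `K`-Lipschitz grows at most quadratically, so `f(x + X)` is
integrable; and `f'(y + X)` is dominated, uniformly for `y` near `x`, by an affine function
of `‖X‖`. Differentiating under the integral sign gives `(fᵘ)'(x) = E[f'(x + X)]`, and an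
expectation of `L`-Lipschitz functions of `x` is again `L`-Lipschitz.
-/

open scoped NNReal

section

variable {E F Ω : Type*} [NormedAddCommGroup E] [NormedSpace ℝ E]
  [NormedAddCommGroup F] [NormedSpace ℝ F] {f : E → F} {K : ℝ≥0}

theorem norm_sub_le_of_lipschitzWith_fderiv (hdiff : Differentiable ℝ f)
    (hf : LipschitzWith K (fderiv ℝ f)) (x v : E) :
    ‖f (x + v) - f x‖ ≤ (‖fderiv ℝ f x‖ + K * ‖v‖) * ‖v‖ := by
  have hbound : ∀ z ∈ Metric.closedBall x ‖v‖,
      ‖fderiv ℝ f z‖ ≤ ‖fderiv ℝ f x‖ + K * ‖v‖ := by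
    intro z hz
    calc ‖fderiv ℝ f z‖ ≤ ‖fderiv ℝ f x‖ + ‖fderiv ℝ f z - fderiv ℝ f x‖ :=
          norm_le_insert' _ _
      _ ≤ ‖fderiv ℝ f x‖ + K * ‖z - x‖ := by gcongr; exact hf.norm_sub_le z x
      _ ≤ ‖fderiv ℝ f x‖ + K * ‖v‖ := by
          gcongr; rwa [← dist_eq_norm, ← Metric.mem_closedBall]
  simpa using (convex_closedBall x ‖v‖).norm_image_sub_le_of_norm_fderiv_le
    (fun z _ => hdiff z) hbound (Metric.mem_closedBall_self (norm_nonneg v))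
    (by simp : x + v ∈ Metric.closedBall x ‖v‖)

variable [MeasurableSpace Ω] {ν : Measure Ω} [IsFiniteMeasure ν] {X : Ω → E}

theorem integrable_fderiv_comp_add (hf : LipschitzWith K (fderiv ℝ f)) (hX : Integrable X ν)
    (x : E) : Integrable (fun ω => fderiv ℝ f (x + X ω)) ν := by
  refine ((integrable_const ‖fderiv ℝ f x‖).add (hX.norm.const_mul K)).mono'
    (hf.continuous.comp_aestronglyMeasurable (aestronglyMeasurable_const.add hX.1))
    (ae_of_all _ fun ω => ?_)
  calc ‖fderiv ℝ f (x + X ω)‖ ≤ ‖fderiv ℝ f x‖ + ‖fderiv ℝ f (x + X ω) - fderiv ℝ f x‖ :=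
        norm_le_insert' _ _
    _ ≤ ‖fderiv ℝ f x‖ + K * ‖X ω‖ := by gcongr; simpa using hf.norm_sub_le (x + X ω) x

theorem integrable_comp_add_of_lipschitzWith_fderiv (hdiff : Differentiable ℝ f)
    (hf : LipschitzWith K (fderiv ℝ f)) (hX : MemLp X 2 ν) (x : E) :
    Integrable (fun ω => f (x + X ω)) ν := by
  refine (((integrable_const ‖f x‖).add ((hX.integrable one_le_two).norm.const_mul
      ‖fderiv ℝ f x‖)).add (hX.integrable_norm_pow'.const_mul K)).mono'
    (hdiff.continuous.comp_aestronglyMeasurable (aestronglyMeasurable_const.add hX.1))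
    (ae_of_all _ fun ω => ?_)
  calc ‖f (x + X ω)‖ ≤ ‖f x‖ + ‖f (x + X ω) - f x‖ := norm_le_insert' _ _
    _ ≤ ‖f x‖ + (‖fderiv ℝ f x‖ + K * ‖X ω‖) * ‖X ω‖ := by
        gcongr; exact norm_sub_le_of_lipschitzWith_fderiv hdiff hf x (X ω)
    _ = ‖f x‖ + ‖fderiv ℝ f x‖ * ‖X ω‖ + K * ‖X ω‖ ^ 2 := by ring

theorem hasFDerivAt_integral_comp_add [CompleteSpace F] (hdiff : Differentiable ℝ f)
    (hf : LipschitzWith K (fderiv ℝ f)) (hX : MemLp X 2 ν) (x : E) :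
    HasFDerivAt (fun x => ∫ ω, f (x + X ω) ∂ν) (∫ ω, fderiv ℝ f (x + X ω) ∂ν) x := by
  have hX1 : Integrable X ν := hX.integrable one_le_two
  refine hasFDerivAt_integral_of_dominated_of_fderiv_le (Metric.ball_mem_nhds x one_pos)
    (bound := fun ω => ‖fderiv ℝ f x‖ + K * (1 + ‖X ω‖))
    (Filter.Eventually.of_forall fun y =>
      (integrable_comp_add_of_lipschitzWith_fderiv hdiff hf hX y).1)
    (integrable_comp_add_of_lipschitzWith_fderiv hdiff hf hX x)
    (integrable_fderiv_comp_add hf hX1 x).1 (ae_of_all _ fun ω y hy => ?_)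
    ((integrable_const _).add ((integrable_const 1).add hX1.norm |>.const_mul K))
    (ae_of_all _ fun ω y _ => (hasFDerivAt_comp_add_right (X ω)).2 (hdiff _).hasFDerivAt)
  have hyx : ‖y - x‖ ≤ 1 := by rw [← dist_eq_norm]; exact (Metric.mem_ball.1 hy).le
  calc ‖fderiv ℝ f (y + X ω)‖ ≤ ‖fderiv ℝ f x‖ + ‖fderiv ℝ f (y + X ω) - fderiv ℝ f x‖ :=
        norm_le_insert' _ _
    _ ≤ ‖fderiv ℝ f x‖ + K * ‖y - x + X ω‖ := by
        gcongr; simpa [add_sub_right_comm] using hf.norm_sub_le (y + X ω) x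
    _ ≤ ‖fderiv ℝ f x‖ + K * (1 + ‖X ω‖) := by
        gcongr; exact (norm_add_le _ _).trans (by gcongr)

end

theorem norm_integral_comp_add_sub_le {E G Ω : Type*} [NormedAddCommGroup E]
    [NormedAddCommGroup G] [NormedSpace ℝ G] [MeasurableSpace Ω] {ν : Measure Ω}
    [IsProbabilityMeasure ν] {X : Ω → E} {g : E → G} {L : ℝ}
    (hg : ∀ x y, ‖g x - g y‖ ≤ L * ‖x - y‖) {x y : E}
    (hx : Integrable (fun ω => g (x + X ω)) ν) (hy : Integrable (fun ω => g (y + X ω)) ν) :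
    ‖∫ ω, g (x + X ω) ∂ν - ∫ ω, g (y + X ω) ∂ν‖ ≤ L * ‖x - y‖ := by
  rw [← integral_sub hx hy]
  simpa using norm_integral_le_of_norm_le_const (ae_of_all ν fun ω => by
    simpa using hg (x + X ω) (y + X ω))

theorem norm_gradient_sub_gradient {E : Type*} [NormedAddCommGroup E] [InnerProductSpace ℝ E]
    [CompleteSpace E] (f : E → ℝ) (x y : E) :
    ‖gradient f x - gradient f y‖ = ‖fderiv ℝ f x - fderiv ℝ f y‖ := by
  rw [gradient, gradient, ← map_sub, LinearIsometryEquiv.norm_map]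

theorem stdGaussian_eq (n : ℕ) :
    stdGaussian n = ProbabilityTheory.stdGaussian (EuclideanSpace ℝ (Fin n)) :=
  ProbabilityTheory.map_pi_eq_stdGaussian

instance isProbabilityMeasure_stdGaussian (n : ℕ) : IsProbabilityMeasure (stdGaussian n) := by
  rw [stdGaussian_eq]; infer_instance

theorem gaussianSmoothing_smooth_general {n : ℕ} (f : EuclideanSpace ℝ (Fin n) → ℝ)
    (L : ℝ)
    (hdiff : ∀ x, DifferentiableAt ℝ f x)
    (hf : ∀ x y, ‖gradient f x - gradient f y‖ ≤ L * ‖x - y‖)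
    (μ : ℝ) :
    (∀ x, DifferentiableAt ℝ (gaussianSmoothing f μ) x) ∧
      (∀ x y, ‖gradient (gaussianSmoothing f μ) x - gradient (gaussianSmoothing f μ) y‖ ≤
        L * ‖x - y‖) := by
  have hf' : ∀ x y, ‖fderiv ℝ f x - fderiv ℝ f y‖ ≤ L * ‖x - y‖ := fun x y => by
    rw [← norm_gradient_sub_gradient]; exact hf x y
  have hlip : LipschitzWith L.toNNReal (fderiv ℝ f) :=
    .of_dist_le' fun x y => by simpa only [dist_eq_norm] using hf' x y
  have hX : MemLp (fun u => μ • u) 2 (stdGaussian n) := by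
    rw [stdGaussian_eq]; exact ProbabilityTheory.IsGaussian.memLp_two_id.const_smul μ
  have hderiv : ∀ x, HasFDerivAt (gaussianSmoothing f μ)
      (∫ u, fderiv ℝ f (x + μ • u) ∂(stdGaussian n)) x :=
    hasFDerivAt_integral_comp_add hdiff hlip hX
  have hint x := integrable_fderiv_comp_add hlip (hX.integrable one_le_two) x
  refine ⟨fun x => (hderiv x).differentiableAt, fun x y => ?_⟩
  rw [norm_gradient_sub_gradient, (hderiv x).fderiv, (hderiv y).fderiv]
  exact norm_integral_comp_add_sub_le hf' (hint x) (hint y)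

/-- Gaussian smoothing of an `L`-smooth function is `L`-smooth. -/
theorem gaussianSmoothing_smooth {n : ℕ} (f : EuclideanSpace ℝ (Fin n) → ℝ)
    (L : ℝ)
    (hdiff : ∀ x, DifferentiableAt ℝ f x)
    (hf : ∀ x y, ‖gradient f x - gradient f y‖ ≤ L * ‖x - y‖)
    (μ : ℝ) (hμ : 0 < μ) :
    (∀ x, DifferentiableAt ℝ (gaussianSmoothing f μ) x) ∧
      (∀ x y, ‖gradient (gaussianSmoothing f μ) x - gradient (gaussianSmoothing f μ) y‖ ≤
        L * ‖x - y‖) :=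
  gaussianSmoothing_smooth_general f L hdiff hf μ
end

section
/- If f : ℝⁿ → ℝ is L-smooth, then for every x ∈ ℝⁿ the Gaussian smoothing satisfies |fᵘ(x) - f(x)| ≤ (μ²/2) L n. -/
/-!
By the descent lemma, `f (x + μ u) - f x - μ ⟪∇f x, u⟫` is bounded by `L μ² ‖u‖² / 2`: the
derivative of `t ↦ f (x + t v) - f x - t ⟪∇f x, v⟫` has absolute value at most `L ‖v‖² t`,
so the function is bounded by the parabola `L ‖v‖² t² / 2`. The linear term integrates to zero
because the Gaussian is centred, and integrating the bound gives the claim since `E ‖u‖² = n`.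
-/

open MeasureTheory

open scoped RealInnerProductSpace

section LipschitzGradient

variable {F : Type*} [NormedAddCommGroup F] [InnerProductSpace ℝ F] [CompleteSpace F]
  {f : F → ℝ} {L : ℝ}

theorem abs_sub_sub_inner_gradient_le (hdiff : ∀ x, DifferentiableAt ℝ f x)
    (hf : ∀ x y, ‖gradient f x - gradient f y‖ ≤ L * ‖x - y‖) (x v : F) :
    |f (x + v) - f x - ⟪gradient f x, v⟫| ≤ L / 2 * ‖v‖ ^ 2 := by
  set g : ℝ → ℝ := fun t => f (x + t • v) - f x - t * ⟪gradient f x, v⟫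
  have hg : ∀ t, HasDerivAt g (⟪gradient f (x + t • v), v⟫ - ⟪gradient f x, v⟫) t := by
    intro t
    have hline : HasDerivAt (fun s : ℝ => x + s • v) v t := by
      simpa using ((hasDerivAt_id t).smul_const v).const_add x
    have hcomp := (hdiff (x + t • v)).hasGradientAt.hasFDerivAt.comp_hasDerivAt t hline
    exact ((hcomp.sub_const (f x)).sub ((hasDerivAt_id t).mul_const ⟪gradient f x, v⟫)).congr_deriv
      (by simp)
  have hbound : ∀ t ∈ Set.Ico (0 : ℝ) 1,
      ‖⟪gradient f (x + t • v), v⟫ - ⟪gradient f x, v⟫‖ ≤ L * ‖v‖ ^ 2 * t := by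
    intro t ht
    calc ‖⟪gradient f (x + t • v), v⟫ - ⟪gradient f x, v⟫‖
        = |⟪gradient f (x + t • v) - gradient f x, v⟫| := by rw [inner_sub_left, Real.norm_eq_abs]
      _ ≤ ‖gradient f (x + t • v) - gradient f x‖ * ‖v‖ := abs_real_inner_le_norm _ _
      _ ≤ L * ‖t • v‖ * ‖v‖ := by
          gcongr
          simpa using hf (x + t • v) x
      _ = L * ‖v‖ ^ 2 * t := by rw [norm_smul, Real.norm_of_nonneg ht.1]; ring
  have hB : ∀ t : ℝ, HasDerivAt (fun s => L / 2 * ‖v‖ ^ 2 * s ^ 2) (L * ‖v‖ ^ 2 * t) t :=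
    fun t => ((hasDerivAt_pow 2 t).const_mul _).congr_deriv (by push_cast; ring)
  have := image_norm_le_of_norm_deriv_right_le_deriv_boundary
    (fun t _ => (hg t).continuousAt.continuousWithinAt) (fun t _ => (hg t).hasDerivWithinAt)
    (by simp [g]) hB hbound (Set.right_mem_Icc.2 zero_le_one)
  simpa [g] using this

variable [MeasurableSpace F] [BorelSpace F] {ν : Measure F} [IsProbabilityMeasure ν]

theorem abs_integral_comp_add_smul_sub_le (hdiff : ∀ x, DifferentiableAt ℝ f x)
    (hf : ∀ x y, ‖gradient f x - gradient f y‖ ≤ L * ‖x - y‖) (hν : MemLp id 2 ν)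
    (hmean : ∫ u, u ∂ν = 0) (x : F) (μ : ℝ) :
    |∫ u, f (x + μ • u) ∂ν - f x| ≤ μ ^ 2 / 2 * L * ∫ u, ‖u‖ ^ 2 ∂ν := by
  set g := μ • gradient f x
  set r : F → ℝ := fun u => f (x + μ • u) - f x - ⟪g, u⟫
  have hr : ∀ u, |r u| ≤ μ ^ 2 / 2 * L * ‖u‖ ^ 2 := by
    intro u
    have h := abs_sub_sub_inner_gradient_le hdiff hf x (μ • u)
    rw [real_inner_smul_right, ← real_inner_smul_left, norm_smul, mul_pow, Real.norm_eq_abs,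
      sq_abs] at h
    linarith
  have hsq : Integrable (fun u => ‖u‖ ^ 2) ν := hν.integrable_norm_pow two_ne_zero
  have hlin : Integrable (fun u => ⟪g, u⟫) ν := (hν.integrable one_le_two).const_inner g
  have hr_int : Integrable r ν := by
    have hcont : Continuous f := Differentiable.continuous hdiff
    exact (hsq.const_mul (μ ^ 2 / 2 * L)).mono' (by fun_prop) (ae_of_all _ hr)
  have hsplit : ∫ u, f (x + μ • u) ∂ν = ∫ u, r u ∂ν + f x := by
    have hr_add : Integrable (fun u => r u + f x) ν := hr_int.add (integrable_const _)
    calc ∫ u, f (x + μ • u) ∂ν = ∫ u, (r u + f x + ⟪g, u⟫) ∂ν := by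
          congr 1 with u
          ring
      _ = ∫ u, r u ∂ν + f x + ⟪g, ∫ u, u ∂ν⟫ := by
        rw [integral_add hr_add hlin, integral_add hr_int (integrable_const _), integral_const,
          integral_inner (f := fun u => u) (hν.integrable one_le_two)]
        simp
      _ = ∫ u, r u ∂ν + f x := by rw [hmean, inner_zero_right, add_zero]
  calc |∫ u, f (x + μ • u) ∂ν - f x| = |∫ u, r u ∂ν| := by rw [hsplit, add_sub_cancel_right]
    _ ≤ ∫ u, |r u| ∂ν := abs_integral_le_integral_abs
    _ ≤ ∫ u, μ ^ 2 / 2 * L * ‖u‖ ^ 2 ∂ν := integral_mono hr_int.abs (hsq.const_mul _) hr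
    _ = μ ^ 2 / 2 * L * ∫ u, ‖u‖ ^ 2 ∂ν := integral_const_mul _ _

end LipschitzGradient

theorem integral_norm_sq_stdGaussian {E : Type*} [NormedAddCommGroup E] [InnerProductSpace ℝ E]
    [FiniteDimensional ℝ E] [MeasurableSpace E] [BorelSpace E] :
    ∫ u, ‖u‖ ^ 2 ∂(ProbabilityTheory.stdGaussian E) = Module.finrank ℝ E := by
  set b := stdOrthonormalBasis ℝ E
  have hL2 : MemLp id 2 (ProbabilityTheory.stdGaussian E) :=
    ProbabilityTheory.IsGaussian.memLp_two_id
  have hcoord : ∀ i, ∫ u, ⟪b i, u⟫ ^ 2 ∂(ProbabilityTheory.stdGaussian E) = 1 := by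
    intro i
    have h := ProbabilityTheory.covarianceBilin_apply hL2 (b i) (b i)
    simp only [ProbabilityTheory.covarianceBilin_stdGaussian] at h
    simpa [sq, innerSL_apply_apply ℝ, b.inner_eq_one] using h.symm
  simp_rw [← b.sum_sq_inner_right]
  rw [integral_finsetSum _ fun i _ => ?_]
  · simp [hcoord]
  · exact (hL2.const_inner (b i)).integrable_sq

theorem gaussianSmoothing_value_close_general {n : ℕ} (f : EuclideanSpace ℝ (Fin n) → ℝ)
    (L : ℝ)
    (hdiff : ∀ x, DifferentiableAt ℝ f x)
    (hf : ∀ x y, ‖gradient f x - gradient f y‖ ≤ L * ‖x - y‖)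
    (μ : ℝ) :
    ∀ x, |gaussianSmoothing f μ x - f x| ≤ μ ^ 2 / 2 * L * n := by
  intro x
  have hγ : stdGaussian n = ProbabilityTheory.stdGaussian (EuclideanSpace ℝ (Fin n)) :=
    ProbabilityTheory.map_pi_eq_stdGaussian
  simpa [gaussianSmoothing, hγ, integral_norm_sq_stdGaussian] using
    abs_integral_comp_add_smul_sub_le hdiff hf ProbabilityTheory.IsGaussian.memLp_two_id
      ProbabilityTheory.integral_id_stdGaussian x μ

/-- `|fᵘ(x) - f(x)| ≤ (μ²/2) L n` for `L`-smooth `f`. -/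
theorem gaussianSmoothing_value_close {n : ℕ} (f : EuclideanSpace ℝ (Fin n) → ℝ)
    (L : ℝ)
    (hdiff : ∀ x, DifferentiableAt ℝ f x)
    (hf : ∀ x y, ‖gradient f x - gradient f y‖ ≤ L * ‖x - y‖)
    (μ : ℝ) (hμ : 0 < μ) :
    ∀ x, |gaussianSmoothing f μ x - f x| ≤ μ ^ 2 / 2 * L * n :=
  gaussianSmoothing_value_close_general f L hdiff hf μ
end
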